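/- There is no pair of functions: for each vertex v of the 9-cycle graph (drawn as a triangle with corner vertices 1,2,3 and two chain vertices per side), an output function h_v taking values in {±1} depending on v's Pauli setting and the Pauli settings of v's two neighbors, such that the products of outputs over the support of the submeasurements C'_1,…,C'_4, C̃'_1,…,C̃'_6 (given in Table I of the paper, with corner settings realizing the GHZ constraints XXX = −1, XYY = YXY = YYX = +1 and the six decoy constraints all = +1) reproduce the quantum-predicted signs (−1, +1, +1, +1, +1, +1, +1, +1, +1, +1). -/

import Mathlib

inductive Pauli | I | X | Y | Z
deriving DecidableEq

open Pauli

/-- The ten Pauli measurements of Table I on the 9-cycle (the `d = 1` inflated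
triangle), vertices ordered `1, 1₍₁,₂₎, 2₍₁,₂₎, 2, 1₍₂,₃₎, 2₍₂,₃₎, 3, 1₍₃,₁₎, 2₍₃,₁₎`
around the cycle. -/
def M8 : Fin 10 → Fin 9 → Pauli :=
  ![![X, X, X, Z, X, X, Z, X, X],
    ![Z, X, X, X, X, X, Z, X, X],
    ![Z, X, X, Z, X, X, X, X, X],
    ![X, X, X, X, X, X, X, X, X],
    ![X, X, X, Y, X, X, Y, X, X],
    ![Z, X, X, Y, X, X, Y, X, X],
    ![Y, X, X, X, X, X, Y, X, X],
    ![Y, X, X, Z, X, X, Y, X, X],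
    ![Y, X, X, Y, X, X, X, X, X],
    ![Y, X, X, Y, X, X, Z, X, X]]

/-- Which outputs are kept in the corresponding submeasurements `C'_k`. -/
def K8 : Fin 10 → Fin 9 → Bool :=
  ![![true, false, true, true, false, false, true, true, false],
    ![true, true, false, true, false, true, true, false, false],
    ![true, false, false, true, true, false, true, false, true],
    ![true, true, true, true, true, true, true, true, true],
    ![false, true, false, true, true, true, true, false, true],
    ![false, true, false, true, true, true, true, false, true],
    ![true, false, true, false, true, false, true, true, true],
    ![true, false, true, false, true, false, true, true, true],
    ![true, true, true, true, false, true, false, true, false],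
    ![true, true, true, true, false, true, false, true, false]]

/-- The quantum-predicted signs of the ten submeasurements. -/
def s8 : Fin 10 → ℤ := ![-1, 1, 1, 1, 1, 1, 1, 1, 1, 1]

/-!
Every local hidden variable `h v a b c` enters the product of all ten constraints once for each
kept vertex `v` of a measurement whose settings at `v - 1, v, v + 1` are `b, a, c`. For the
measurements of Table I each such local context occurs an even number of times, so, since
`h v a b c ^ 2 = 1`, the product of all left-hand sides is `1`, whereas the product of the
quantum signs is `-1`.
-/

open Finset

theorem Finset.prod_comp_eq_one_of_even_card_fiber {ι α M : Type*} [DecidableEq α] [CommMonoid M]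
    (s : Finset ι) (f : ι → α) (g : α → M) (hg : ∀ a, g a ^ 2 = 1)
    (hfib : ∀ i ∈ s, Even #{j ∈ s | f j = f i}) :
    ∏ i ∈ s, g (f i) = 1 := by
  rw [prod_comp]
  refine prod_eq_one fun a ha => ?_
  obtain ⟨i, hi, rfl⟩ := mem_image.1 ha
  obtain ⟨m, hm⟩ := hfib i hi
  rw [hm, ← two_mul, pow_mul, hg, one_pow]

def localContext8 (p : Fin 10 × Fin 9) : Fin 9 × Pauli × Pauli × Pauli :=
  (p.2, M8 p.1 p.2, M8 p.1 (p.2 - 1), M8 p.1 (p.2 + 1))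

def keptPairs8 : Finset (Fin 10 × Fin 9) := {p | K8 p.1 p.2}

/-- The parity condition, Eq. (8). -/
theorem even_card_localContext8_fiber :
    ∀ p ∈ keptPairs8, Even #{q ∈ keptPairs8 | localContext8 q = localContext8 p} := by
  decide +kernel

theorem prod_s8 : ∏ k, s8 k = -1 := by
  decide +kernel

/-- No 1-LHV* model on the 9-cycle (each vertex's ±1 output depending on its own
Pauli setting and those of its two neighbours) reproduces the quantum-predicted
signs of the ten submeasurements of Table I. -/
theorem stmt8 : ¬ ∃ h : Fin 9 → Pauli → Pauli → Pauli → ℤ,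
    (∀ v a b c, h v a b c = 1 ∨ h v a b c = -1) ∧
    ∀ k : Fin 10,
      (∏ v : Fin 9, if K8 k v then h v (M8 k v) (M8 k (v - 1)) (M8 k (v + 1)) else 1)
        = s8 k := by
  rintro ⟨h, hpm, hc⟩
  set g : Fin 9 × Pauli × Pauli × Pauli → ℤ := fun x => h x.1 x.2.1 x.2.2.1 x.2.2.2
  have hg : ∀ x, g x ^ 2 = 1 := fun x => by
    rcases hpm x.1 x.2.1 x.2.2.1 x.2.2.2 with hx | hx <;> simp [g, hx]
  have hprod : ∏ p ∈ keptPairs8, g (localContext8 p) = ∏ k, s8 k := by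
    rw [keptPairs8, prod_filter, ← univ_product_univ, prod_product]
    exact prod_congr rfl fun k _ => hc k
  rw [prod_comp_eq_one_of_even_card_fiber _ _ _ hg even_card_localContext8_fiber, prod_s8] at hprod
  exact absurd hprod (by decide)
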